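/- Interlacing of the zeros of f (from the proof of Theorem 2): let n ≥ 2 and let x_1 < x_2 < ⋯ < x_n be reals and p_1,…,p_n > 0. Then for each i ∈ {1,…,n−1} there exists a real λ with x_i < λ < x_{i+1} and f(λ) = 0. -/
import Mathlib

open Finset

noncomputable section

/-- The polynomial f(x) = ∏ᵢ (xᵢ − x) − ∑ᵢ pᵢ ∏_{j ≠ i} (xⱼ − x). -/
def fpoly {n : ℕ} (x p : Fin n → ℝ) (t : ℝ) : ℝ :=
  ∏ i, (x i - t) - ∑ i, p i * ∏ j ∈ Finset.univ.erase i, (x j - t)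

lemma fpoly_continuous {n : ℕ} (x p : Fin n → ℝ) : Continuous (fpoly x p) := by
  unfold fpoly
  apply Continuous.sub
  · exact continuous_finset_prod _ fun i _ => (continuous_const.sub continuous_id)
  · exact continuous_finset_sum _ fun i _ => continuous_const.mul <|
      continuous_finset_prod _ fun j _ => (continuous_const.sub continuous_id)

lemma fpoly_eval {n : ℕ} (x p : Fin n → ℝ) (i : Fin n) :
    fpoly x p (x i) = -(p i * ∏ j ∈ Finset.univ.erase i, (x j - x i)) := by
  unfold fpoly
  rw [Finset.prod_eq_zero (Finset.mem_univ i) (by ring),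
    Finset.sum_eq_single i ?_ (by simp)]
  · ring
  · intro k _ hk
    rw [Finset.prod_eq_zero (Finset.mem_erase.mpr ⟨(Ne.symm hk), Finset.mem_univ i⟩) (by ring),
      mul_zero]

lemma erase_eq_union {n : ℕ} (i : Fin n) :
    Finset.univ.erase i = Finset.Iio i ∪ Finset.Ioi i := by
  ext j
  simp only [Finset.mem_erase, Finset.mem_union, Finset.mem_Iio, Finset.mem_Ioi, Finset.mem_univ,
    and_true]
  exact ⟨fun hne => lt_or_gt_of_ne hne, fun hlt => hlt.elim ne_of_lt ne_of_gt⟩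

lemma sign_prod {n : ℕ} (x : Fin n → ℝ) (hx : StrictMono x) (i : Fin n) :
    0 < (-1 : ℝ) ^ (i : ℕ) * ∏ j ∈ Finset.univ.erase i, (x j - x i) := by
  rw [erase_eq_union, Finset.prod_union (by
    simp only [Finset.disjoint_left, Finset.mem_Iio, Finset.mem_Ioi]
    exact fun {a} h1 h2 => absurd (h1.trans h2) (lt_irrefl a))]
  have h1 : ∏ j ∈ Finset.Iio i, (x j - x i) =
      (-1 : ℝ) ^ (i : ℕ) * ∏ j ∈ Finset.Iio i, (x i - x j) := by
    rw [← Fin.card_Iio i, ← Finset.prod_const, ← Finset.prod_mul_distrib]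
    exact Finset.prod_congr rfl fun j _ => by ring
  rw [h1, ← mul_assoc, ← mul_assoc, ← mul_pow, neg_one_mul, neg_neg, one_pow, one_mul]
  apply mul_pos
  · exact Finset.prod_pos fun j hj => sub_pos.mpr (hx (Finset.mem_Iio.mp hj))
  · exact Finset.prod_pos fun j hj => sub_pos.mpr (hx (Finset.mem_Ioi.mp hj))

/-- Interlacing of the zeros of f (from the proof of Theorem 2): for
x₁ < x₂ < ⋯ < xₙ and p₁,…,pₙ > 0, f has a zero strictly between any two
consecutive xᵢ's. -/
theorem fpoly_interlacing (n : ℕ) (hn : 2 ≤ n) (x p : Fin n → ℝ)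
    (hx : StrictMono x) (hp : ∀ i, 0 < p i)
    (i : Fin n) (h : (i : ℕ) + 1 < n) :
    ∃ lam : ℝ, x i < lam ∧ lam < x ⟨(i : ℕ) + 1, h⟩ ∧ fpoly x p lam = 0 := by
  set i' : Fin n := ⟨(i : ℕ) + 1, h⟩ with hi'
  have hii' : i < i' := by simp [hi', Fin.lt_def]
  have hab : x i ≤ x i' := (hx hii').le
  have hcont : ContinuousOn (fpoly x p) (Set.Icc (x i) (x i')) :=
    (fpoly_continuous x p).continuousOn
  have hPi := sign_prod x hx i
  have hPi' := sign_prod x hx i'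
  have hci' : ((i' : ℕ) : ℕ) = (i : ℕ) + 1 := rfl
  rw [hci', pow_succ] at hPi'
  have hfa := fpoly_eval x p i
  have hfb := fpoly_eval x p i'
  rcases Nat.even_or_odd (i : ℕ) with he | ho
  · -- (-1)^i = 1 : P i > 0, P i' < 0, so f a < 0 < f b
    rw [he.neg_one_pow, one_mul] at hPi hPi'
    have hfa' : fpoly x p (x i) < 0 := by
      rw [hfa]; exact neg_neg_iff_pos.mpr (mul_pos (hp i) hPi)
    have hfb' : 0 < fpoly x p (x i') := by
      rw [hfb]
      have : ∏ j ∈ Finset.univ.erase i', (x j - x i') < 0 := by nlinarith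
      nlinarith [hp i']
    obtain ⟨lam, hlam, hval⟩ := intermediate_value_Ioo hab hcont ⟨hfa', hfb'⟩
    exact ⟨lam, hlam.1, hlam.2, hval⟩
  · rw [ho.neg_one_pow] at hPi hPi'
    have hPineg : ∏ j ∈ Finset.univ.erase i, (x j - x i) < 0 := by nlinarith
    have hfa' : 0 < fpoly x p (x i) := by rw [hfa]; nlinarith [hp i]
    have hfb' : fpoly x p (x i') < 0 := by
      rw [hfb]
      have : 0 < ∏ j ∈ Finset.univ.erase i', (x j - x i') := by nlinarith
      nlinarith [hp i']
    obtain ⟨lam, hlam, hval⟩ := intermediate_value_Ioo' hab hcont ⟨hfb', hfa'⟩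
    exact ⟨lam, hlam.1, hlam.2, hval⟩
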